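/- Let n ≥ 3, let g be a symmetric invertible n×n real matrix with inverse matrix G, let S : Fin n → Fin n → ℝ be a (0,2)-tensor and λ : ℝ. If for all indices m, i, j, k one has g m k * S i j − g m j * S i k + g i j * S m k − g i k * S m j = λ * (g m k * g i j − g m j * g i k), then S i j = (λ/2) * g i j for all i, j, and the trace Σ_{i,j} G i j * S i j equals n*λ/2. -/

import Mathlib

/-!
Writing `T = S - (λ/2) g`, the hypothesis says that the Kulkarni–Nomizu product `g ⊙ T` vanishes.
Contracting `g ⊙ T` with `g⁻¹` once gives `(n - 2) T + (tr T) g`, and contracting again gives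
`(2n - 2) tr T`; for `n ≥ 3` both coefficients are nonzero, so `tr T = 0` and then `T = 0`.
-/

open Finset

def kulkarniNomizu {ι R : Type*} [CommRing R] (h k : ι → ι → R) (w x y z : ι) : R :=
  h w z * k x y - h w y * k x z + h x y * k w z - h x z * k w y

def contract {ι R : Type*} [Fintype ι] [CommRing R] (G T : ι → ι → R) : R :=
  ∑ k, ∑ m, G k m * T m k

section Contraction

variable {ι R : Type*} [Fintype ι] [DecidableEq ι] [CommRing R] {g G : ι → ι → R}

theorem sum_sum_inv_mul_self (hGg : ∀ i j, ∑ k, G i k * g k j = if i = j then 1 else 0)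
    (c : R) : ∑ k, ∑ m, G k m * (g m k * c) = Fintype.card ι * c := by
  simp only [← mul_assoc, ← sum_mul, hGg, if_true, sum_const, card_univ, nsmul_one]

theorem sum_sum_inv_mul_left (hGg : ∀ i j, ∑ k, G i k * g k j = if i = j then 1 else 0)
    (x : ι → R) (j : ι) : ∑ k, ∑ m, G k m * (g m j * x k) = x j := by
  simp only [← mul_assoc, ← sum_mul, hGg, ite_mul, one_mul, zero_mul, sum_ite_eq', mem_univ,
    if_true]

theorem sum_sum_inv_mul_right (hgG : ∀ i j, ∑ k, g i k * G k j = if i = j then 1 else 0)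
    (x : ι → R) (i : ι) : ∑ k, ∑ m, G k m * (g i k * x m) = x i := by
  rw [sum_comm]
  simp only [mul_left_comm (G _ _), ← mul_assoc, ← sum_mul, hgG, ite_mul, one_mul, zero_mul,
    sum_ite_eq, mem_univ, if_true]

theorem sum_sum_inv_mul_kulkarniNomizu
    (hgG : ∀ i j, ∑ k, g i k * G k j = if i = j then 1 else 0)
    (hGg : ∀ i j, ∑ k, G i k * g k j = if i = j then 1 else 0) (T : ι → ι → R) (i j : ι) :
    ∑ k, ∑ m, G k m * kulkarniNomizu g T m i j k =
      (Fintype.card ι - 2) * T i j + contract G T * g i j := by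
  have hTg : ∑ k, ∑ m, G k m * (g i j * T m k) = contract G T * g i j := by
    simp only [contract, sum_mul]
    exact sum_congr rfl fun _ _ => sum_congr rfl fun _ _ => by ring
  simp only [kulkarniNomizu, mul_add, mul_sub, sum_add_distrib, sum_sub_distrib]
  rw [sum_sum_inv_mul_self hGg, sum_sum_inv_mul_left hGg (T i), hTg,
    sum_sum_inv_mul_right hgG (T · j)]
  ring

end Contraction

theorem eq_zero_of_kulkarniNomizu_eq_zero {ι R : Type*} [Fintype ι] [DecidableEq ι] [Field R]
    [CharZero R] {g G T : ι → ι → R} (hn : 3 ≤ Fintype.card ι)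
    (hgG : ∀ i j, ∑ k, g i k * G k j = if i = j then 1 else 0)
    (hGg : ∀ i j, ∑ k, G i k * g k j = if i = j then 1 else 0)
    (hT : ∀ w x y z, kulkarniNomizu g T w x y z = 0) : T = 0 := by
  have hcard_sub_two : (Fintype.card ι - 2 : R) ≠ 0 := by
    rw [← Nat.cast_ofNat, ← Nat.cast_sub (by omega)]
    exact Nat.cast_ne_zero.mpr (by omega)
  have htwo_card_sub_two : (2 * Fintype.card ι - 2 : R) ≠ 0 := by
    rw [← Nat.cast_ofNat, ← Nat.cast_mul, ← Nat.cast_sub (by omega)]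
    exact Nat.cast_ne_zero.mpr (by omega)
  have h_once : ∀ i j, (Fintype.card ι - 2) * T i j + contract G T * g i j = 0 := fun i j => by
    simp [← sum_sum_inv_mul_kulkarniNomizu hgG hGg, hT]
  have h_twice : (2 * Fintype.card ι - 2) * contract G T = 0 := by
    have hsplit : ∀ k m, G k m * ((Fintype.card ι - 2) * T m k + contract G T * g m k) =
        (Fintype.card ι - 2) * (G k m * T m k) + G k m * (g m k * contract G T) :=
      fun k m => by ring
    have := calc
      0 = ∑ k, ∑ m, G k m * ((Fintype.card ι - 2) * T m k + contract G T * g m k) := by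
            simp [h_once]
      _ = (Fintype.card ι - 2) * contract G T + Fintype.card ι * contract G T := by
            simp only [hsplit, sum_add_distrib, ← mul_sum, sum_sum_inv_mul_self hGg]
            rfl
    linear_combination -this
  have h_trace : contract G T = 0 := (mul_eq_zero.mp h_twice).resolve_left htwo_card_sub_two
  funext i j
  simpa [h_trace, hcard_sub_two] using h_once i j

/-- Algebraic core of the forward direction of Theorem 4.2: if
`g_{mk}S_{ij} − g_{mj}S_{ik} + g_{ij}S_{mk} − g_{ik}S_{mj} = λ(g_{mk}g_{ij} − g_{mj}g_{ik})`
then `S_{ij} = (λ/2) g_{ij}` and the trace `g^{ij}S_{ij}` equals `nλ/2`. -/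
theorem stmt_1 (n : ℕ) (hn : 3 ≤ n) (g G : Fin n → Fin n → ℝ)
    (hsymm : ∀ i j, g i j = g j i)
    (hgG : ∀ i j, (∑ k, g i k * G k j) = if i = j then (1 : ℝ) else 0)
    (hGg : ∀ i j, (∑ k, G i k * g k j) = if i = j then (1 : ℝ) else 0)
    (S : Fin n → Fin n → ℝ) (lam : ℝ)
    (h : ∀ m i j k, g m k * S i j - g m j * S i k + g i j * S m k - g i k * S m j =
      lam * (g m k * g i j - g m j * g i k)) :
    (∀ i j, S i j = (lam / 2) * g i j) ∧
      (∑ i, ∑ j, G i j * S i j) = (n : ℝ) * lam / 2 := by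
  have hT : ∀ m i j k, kulkarniNomizu g (fun i j => S i j - lam / 2 * g i j) m i j k = 0 :=
    fun m i j k => by unfold kulkarniNomizu; linear_combination h m i j k
  have hS : ∀ i j, S i j = lam / 2 * g i j := fun i j =>
    sub_eq_zero.mp (congrFun₂ (eq_zero_of_kulkarniNomizu_eq_zero (by simpa) hgG hGg hT) i j)
  refine ⟨hS, ?_⟩
  calc ∑ i, ∑ j, G i j * S i j = ∑ i, ∑ j, G i j * (g j i * (lam / 2)) := by
        simp only [hS, hsymm, mul_comm (lam / 2)]
    _ = n * lam / 2 := by rw [sum_sum_inv_mul_self hGg, Fintype.card_fin, mul_div_assoc]
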